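/- Let γ, γ̃ ∈ ℝ with γ ≤ γ̃. Suppose the γ-shifted system has a dichotomy on a splitting (L1,L2) and the γ̃-shifted system has a dichotomy on a splitting (L̃1,L̃2). Then L1 ⊆ L̃1. -/

import Mathlib

open Set Filter Topology

noncomputable section

abbrev Euc (d : ℕ) := EuclideanSpace ℝ (Fin d)

/-- The solution `x(n, x₀)` of `x(n+1) = A(n) x(n)`, `x(0,x₀) = x₀`. -/
def sol {d : ℕ} (A : ℕ → (Euc d ≃L[ℝ] Euc d)) : ℕ → Euc d → Euc d
  | 0, x => x
  | n + 1, x => A n (sol A n x)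

/-- Boundedness of the coefficients `A(n)` and their inverses. -/
def BddSys {d : ℕ} (A : ℕ → (Euc d ≃L[ℝ] Euc d)) : Prop :=
  (∃ c : ℝ, ∀ n : ℕ, ‖(A n : Euc d →L[ℝ] Euc d)‖ ≤ c) ∧
  (∃ c : ℝ, ∀ n : ℕ, ‖((A n).symm : Euc d →L[ℝ] Euc d)‖ ≤ c)

/-- `D1(γ,U)` holds uniformly (constant `C`). -/
def D1u {d : ℕ} (A : ℕ → (Euc d ≃L[ℝ] Euc d)) (γ : ℝ) (U : Submodule ℝ (Euc d)) : Prop :=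
  ∃ C : ℝ, 0 < C ∧
    ∀ m n : ℕ, m ≤ n → ∀ x₀ ∈ U,
      ‖sol A n x₀‖ ≤ C * Real.exp (γ * ((n : ℝ) - (m : ℝ))) * ‖sol A m x₀‖

/-- `D2(γ,U)` holds uniformly (constant `C`). -/
def D2u {d : ℕ} (A : ℕ → (Euc d ≃L[ℝ] Euc d)) (γ : ℝ) (U : Submodule ℝ (Euc d)) : Prop :=
  ∃ C : ℝ, 0 < C ∧
    ∀ m n : ℕ, m ≤ n → ∀ x₀ ∈ U,
      C * Real.exp (γ * ((n : ℝ) - (m : ℝ))) * ‖sol A m x₀‖ ≤ ‖sol A n x₀‖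

/-- `𝒰` is a set of subspaces of `L` whose union is `L`. -/
def IsCover {d : ℕ} (𝒰 : Set (Submodule ℝ (Euc d))) (L : Submodule ℝ (Euc d)) : Prop :=
  (∀ U ∈ 𝒰, U ≤ L) ∧ (⋃ U ∈ 𝒰, (U : Set (Euc d))) = (L : Set (Euc d))

/-- The `γ`-shifted system `x(n+1) = e^{-γ} A(n) x(n)` has a dichotomy on the
splitting `(L1,L2)`. -/
def ShiftedDichotomy {d : ℕ} (A : ℕ → (Euc d ≃L[ℝ] Euc d)) (γ : ℝ)
    (L1 L2 : Submodule ℝ (Euc d)) : Prop :=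
  IsCompl L1 L2 ∧
  ∃ 𝒰1 𝒰2 : Set (Submodule ℝ (Euc d)), IsCover 𝒰1 L1 ∧ IsCover 𝒰2 L2 ∧
    ∃ α : ℝ, 0 < α ∧ (∀ U ∈ 𝒰1, D1u A (γ - α) U) ∧ (∀ U ∈ 𝒰2, D2u A (γ + α) U)

/-!
Solutions through `L1` grow at an exponential rate below `γ ≤ γ'`, and those through `L1'` at a
rate below `γ'`, so both are `o(e^{γ' n})`. Writing `x ∈ L1` as `y + z` with `y ∈ L1'`, `z ∈ L2'`,
the solution through `z` is therefore `o(e^{γ' n})` too, whereas solutions through nonzero points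
of `L2'` grow at a rate above `γ'`; hence `z = 0`.
-/

open Asymptotics

lemma sol_add {d : ℕ} (A : ℕ → (Euc d ≃L[ℝ] Euc d)) (n : ℕ) (x y : Euc d) :
    sol A n (x + y) = sol A n x + sol A n y := by
  induction n with
  | zero => rfl
  | succ n ih => simp only [sol, ih, map_add]

lemma isLittleO_exp_mul_natCast {β γ : ℝ} (h : β < γ) :
    (fun n : ℕ => Real.exp (β * n)) =o[atTop] fun n => Real.exp (γ * n) := by
  refine Real.isLittleO_exp_comp_exp_comp.mpr ?_
  simp_rw [← sub_mul]
  exact tendsto_natCast_atTop_atTop.const_mul_atTop (sub_pos.mpr h)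

lemma isBigO_exp_mul_natCast {β γ : ℝ} (h : β ≤ γ) :
    (fun n : ℕ => Real.exp (β * n)) =O[atTop] fun n => Real.exp (γ * n) := by
  refine Real.isBigO_exp_comp_exp_comp.mpr ⟨0, eventually_map.mpr (Eventually.of_forall fun n => ?_)⟩
  simpa [← sub_mul] using mul_nonpos_of_nonpos_of_nonneg (sub_nonpos.mpr h) n.cast_nonneg

lemma IsCover.exists_mem {d : ℕ} {𝒰 : Set (Submodule ℝ (Euc d))} {L : Submodule ℝ (Euc d)}
    (h : IsCover 𝒰 L) {x : Euc d} (hx : x ∈ L) : ∃ U ∈ 𝒰, x ∈ U := by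
  simpa using (h.2 ▸ hx : x ∈ ⋃ U ∈ 𝒰, (U : Set (Euc d)))

section

variable {d : ℕ} {A : ℕ → (Euc d ≃L[ℝ] Euc d)} {β : ℝ} {U : Submodule ℝ (Euc d)}

lemma D1u.isBigO_exp (h : D1u A β U) {x : Euc d} (hx : x ∈ U) :
    (fun n : ℕ => sol A n x) =O[atTop] fun n => Real.exp (β * n) := by
  obtain ⟨C, -, hC⟩ := h
  refine IsBigO.of_bound (C * ‖x‖) (Eventually.of_forall fun n => ?_)
  have := hC 0 n n.zero_le x hx
  rw [Real.norm_of_nonneg (Real.exp_pos _).le]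
  simp only [sol, Nat.cast_zero, sub_zero] at this
  linarith

lemma D2u.isBigO_exp (h : D2u A β U) {z : Euc d} (hz : z ∈ U) :
    (fun n : ℕ => ‖z‖ * Real.exp (β * n)) =O[atTop] fun n => sol A n z := by
  obtain ⟨C, hC, hCz⟩ := h
  refine IsBigO.of_bound C⁻¹ (Eventually.of_forall fun n => ?_)
  have := hCz 0 n n.zero_le z hz
  simp only [sol, Nat.cast_zero, sub_zero] at this
  rw [norm_mul, norm_norm, Real.norm_of_nonneg (Real.exp_pos _).le, le_inv_mul_iff₀ hC]
  linarith

end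

namespace ShiftedDichotomy

variable {d : ℕ} {A : ℕ → (Euc d ≃L[ℝ] Euc d)} {γ : ℝ} {L1 L2 : Submodule ℝ (Euc d)}

lemma isLittleO_of_mem_left (h : ShiftedDichotomy A γ L1 L2) {x : Euc d} (hx : x ∈ L1) :
    (fun n : ℕ => sol A n x) =o[atTop] fun n => Real.exp (γ * n) := by
  obtain ⟨-, 𝒰1, -, hcov1, -, α, hα, hD1, -⟩ := h
  obtain ⟨U, hU, hxU⟩ := hcov1.exists_mem hx
  exact (hD1 U hU).isBigO_exp hxU |>.trans_isLittleO (isLittleO_exp_mul_natCast (by linarith))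

lemma eq_zero_of_mem_right (h : ShiftedDichotomy A γ L1 L2) {z : Euc d} (hz : z ∈ L2)
    (hzo : (fun n : ℕ => sol A n z) =o[atTop] fun n => Real.exp (γ * n)) : z = 0 := by
  obtain ⟨-, -, 𝒰2, -, hcov2, α, hα, -, hD2⟩ := h
  obtain ⟨U, hU, hzU⟩ := hcov2.exists_mem hz
  by_contra hz0
  have hfast : (fun n : ℕ => Real.exp ((γ + α) * n)) =o[atTop] fun n => Real.exp (γ * n) :=
    (isLittleO_const_mul_left_iff (norm_ne_zero_iff.mpr hz0)).mp
      (((hD2 U hU).isBigO_exp hzU).trans_isLittleO hzo)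
  -- `e^{γn}` is at most `e^{(γ+α)n}`, so this would make `e^{γn}` negligible against itself.
  exact isLittleO_irrefl' (Frequently.of_forall fun _ => norm_ne_zero_iff.mpr (Real.exp_pos _).ne')
    ((isBigO_exp_mul_natCast (by linarith)).trans_isLittleO hfast)

end ShiftedDichotomy

theorem dichotomy_subspace_monotone {d : ℕ}
    (A : ℕ → (Euc d ≃L[ℝ] Euc d))
    (γ γ' : ℝ) (hγ : γ ≤ γ')
    (L1 L2 L1' L2' : Submodule ℝ (Euc d))
    (h : ShiftedDichotomy A γ L1 L2) (h' : ShiftedDichotomy A γ' L1' L2') :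
    L1 ≤ L1' := by
  intro x hx
  obtain ⟨y, hy, z, hz, rfl⟩ :=
    Submodule.mem_sup.mp (h'.1.sup_eq_top ▸ Submodule.mem_top : x ∈ L1' ⊔ L2')
  have hz_small : (fun n : ℕ => sol A n z) =o[atTop] fun n => Real.exp (γ' * n) := by
    have hyz := ((h.isLittleO_of_mem_left hx).trans_isBigO (isBigO_exp_mul_natCast hγ)).sub
      (h'.isLittleO_of_mem_left hy)
    simpa only [sol_add, add_sub_cancel_left] using hyz
  rwa [h'.eq_zero_of_mem_right hz hz_small, add_zero]

end
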